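/- Let G be a finite simple connected graph with at least one edge and maximum degree Δ. Then for every vertex v_i of degree d_i, E_G(v_i) ≥ d_i/Δ, and equality holds (for some vertex) if and only if G is isomorphic to the complete bipartite graph K_{d,d} with d = Δ. -/

import Mathlib

/-!
Let `A` be the adjacency matrix and `|A| = √(A²)`. Every eigenvalue `λ` of `A` satisfies
`|λ| ≤ Δ` (Gershgorin), so `λ² ≤ Δ |λ|` and the functional calculus gives `A² ≤ Δ |A|` in the
Loewner order; on the diagonal this reads `dᵢ ≤ Δ E(vᵢ)`.

If equality holds at `i`, the `i`-th column of the positive semidefinite matrix `Δ |A| - A²`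
vanishes, so the `i`-th row of `A²` is `Δ` times that of `|A|`, and since `|A|² = A²` the
common-neighbour counts `cⱼ = (A²)ᵢⱼ` satisfy `∑ⱼ cⱼ² = Δ² dᵢ`. As `cⱼ ≤ Δ` and
`∑ⱼ cⱼ = ∑_{k ~ i} d_k ≤ Δ dᵢ`, every `cⱼ` is `0` or `Δ` and every neighbour of `i` has degree
`Δ`; the vertices sharing all neighbours of `i`, together with those neighbours, then form the
two sides of a `K_{Δ,Δ}`, which by connectedness is all of `G`. Conversely `K_{Δ,Δ}` satisfies
`A³ = Δ² A`, so `|A| = A² / Δ` and `E(vᵢ) = dᵢ / Δ`.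
-/

open Matrix Finset

/-- The energy of the vertex `i` of a finite simple graph `G`:
the `(i,i)` entry of `|A| = (A Aᴴ)^{1/2}`, where `A` is the adjacency matrix. -/
noncomputable def vertexEnergy {n : ℕ} (G : SimpleGraph (Fin n)) [DecidableRel G.Adj]
    (i : Fin n) : ℝ :=
  (((Matrix.posSemidef_self_mul_conjTranspose (G.adjMatrix ℝ)).1.eigenvectorUnitary : Matrix (Fin n) (Fin n) ℝ) *
    Matrix.diagonal ((RCLike.ofReal : ℝ → ℝ) ∘ Real.sqrt ∘ (Matrix.posSemidef_self_mul_conjTranspose (G.adjMatrix ℝ)).1.eigenvalues) *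
    (star ((Matrix.posSemidef_self_mul_conjTranspose (G.adjMatrix ℝ)).1.eigenvectorUnitary : Matrix (Fin n) (Fin n) ℝ))) i i

open scoped MatrixOrder ComplexOrder

lemma Finset.sum_eq_and_eq_zero_or_eq_of_sum_sq_eq {ι : Type*} (s : Finset ι) (f : ι → ℕ)
    {D m : ℕ} (hD : 0 < D) (hf : ∀ j ∈ s, f j ≤ D) (hsum : ∑ j ∈ s, f j ≤ D * m)
    (hsq : ∑ j ∈ s, f j ^ 2 = D ^ 2 * m) :
    ∑ j ∈ s, f j = D * m ∧ ∀ j ∈ s, f j = 0 ∨ f j = D := by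
  have hsq_le : ∀ j ∈ s, f j ^ 2 ≤ D * f j := fun j hj => by
    rw [sq]; exact Nat.mul_le_mul_right _ (hf j hj)
  have hsq_sum_le : ∑ j ∈ s, f j ^ 2 ≤ ∑ j ∈ s, D * f j := sum_le_sum hsq_le
  rw [← mul_sum] at hsq_sum_le
  have hsum_eq : ∑ j ∈ s, f j = D * m := by
    refine le_antisymm hsum (Nat.le_of_mul_le_mul_left ?_ hD)
    calc D * (D * m) = ∑ j ∈ s, f j ^ 2 := by rw [hsq]; ring
      _ ≤ D * ∑ j ∈ s, f j := hsq_sum_le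
  refine ⟨hsum_eq, fun j hj => ?_⟩
  have hterm := (sum_eq_sum_iff_of_le hsq_le).1 (by rw [← mul_sum, hsum_eq, hsq]; ring) j hj
  rcases Nat.eq_zero_or_pos (f j) with h0 | hpos
  · exact Or.inl h0
  · exact Or.inr (Nat.eq_of_mul_eq_mul_right hpos (by rw [← sq]; exact hterm))

namespace Matrix

variable {ι : Type*} [Fintype ι] [DecidableEq ι]

lemma PosSemidef.apply_eq_zero_of_diag_eq_zero {𝕜 : Type*} [RCLike 𝕜] {M : Matrix ι ι 𝕜}
    (hM : M.PosSemidef) {i : ι} (hi : M i i = 0) (j : ι) : M j i = 0 := by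
  have h := (hM.dotProduct_mulVec_zero_iff (Pi.single i 1)).1 (by simpa using hi)
  simpa using congrFun h j

lemma IsHermitian.mul_self_le_smul_abs {A : Matrix ι ι ℝ} (hA : A.IsHermitian) {r : ℝ}
    (hr : ∀ x ∈ spectrum ℝ A, |x| ≤ r) : A * A ≤ r • CFC.abs A := by
  have hsq : A * A = cfc (fun x : ℝ => x * x) A := by
    rw [cfc_mul (fun x : ℝ => x) (fun x : ℝ => x) A, cfc_id' ℝ A]
  rw [CFC.abs_eq_cfc_norm A hA.isSelfAdjoint, ← cfc_smul .., hsq, cfc_le_iff ..]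
  intro x hx
  simp only [Real.norm_eq_abs, smul_eq_mul]
  nlinarith [hr x hx, abs_mul_abs_self x, abs_nonneg x]

lemma IsHermitian.sum_sq_mul_self_apply {A : Matrix ι ι ℝ} (hA : A.IsHermitian) {r : ℝ}
    (hle : A * A ≤ r • CFC.abs A) {i : ι} (hi : (A * A) i i = r * CFC.abs A i i) :
    ∑ j, (A * A) i j ^ 2 = r ^ 2 * (A * A) i i := by
  have hAA : (A * A).IsHermitian := by rw [IsHermitian, conjTranspose_mul, hA.eq]
  have habs : (CFC.abs A).IsHermitian := (CFC.abs_nonneg A).posSemidef.1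
  have hcol : ∀ j, (A * A) i j = r * CFC.abs A i j := fun j => by
    have h := (le_iff.1 hle).apply_eq_zero_of_diag_eq_zero (i := i) (by simp [hi]) j
    simp only [sub_apply, smul_apply, smul_eq_mul, sub_eq_zero] at h
    rw [← hAA.apply i j, ← habs.apply i j, star_trivial, star_trivial, h]
  calc ∑ j, (A * A) i j ^ 2 = r ^ 2 * ∑ j, CFC.abs A i j * CFC.abs A j i := by
        rw [mul_sum]
        refine sum_congr rfl fun j _ => ?_
        rw [hcol, ← habs.apply i j, star_trivial]
        ring
    _ = r ^ 2 * (A * A) i i := by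
        rw [← mul_apply, CFC.abs_mul_abs, star_eq_conjTranspose, hA.eq]

lemma IsHermitian.abs_eq_inv_smul_mul_self {A : Matrix ι ι ℝ} (hA : A.IsHermitian) {r : ℝ}
    (hr : 0 < r) (h : A * A * A = r ^ 2 • A) : CFC.abs A = r⁻¹ • (A * A) := by
  have hAA : A * A = star A * A := by rw [star_eq_conjTranspose, hA.eq]
  have hnonneg : 0 ≤ r⁻¹ • (A * A) := by
    rw [hAA]
    exact smul_nonneg (inv_nonneg.2 hr.le) (star_mul_self_nonneg A)
  rw [CFC.abs, CFC.sqrt_eq_iff _ _ (star_mul_self_nonneg A) hnonneg, ← hAA, smul_mul_smul,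
    ← mul_assoc, h, smul_mul_assoc, smul_smul]
  field_simp
  rw [one_smul]

end Matrix

namespace SimpleGraph

instance {α β : Type*} : DecidableRel (completeBipartiteGraph α β).Adj := fun _ _ =>
  inferInstanceAs (Decidable (_ ∨ _))

variable {V : Type*} [Fintype V] {G : SimpleGraph V} [DecidableRel G.Adj]

lemma Connected.degree_pos (hconn : G.Connected) (hedge : G.edgeSet.Nonempty) (v : V) :
    0 < G.degree v := by
  obtain ⟨e, he⟩ := hedge
  induction e using Sym2.ind with
  | _ u w =>
    have : Nontrivial V := ⟨u, w, G.ne_of_adj he⟩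
    exact hconn.preconnected.degree_pos_of_nontrivial v

variable (G) [DecidableEq V]

lemma abs_le_maxDegree_of_mem_spectrum {x : ℝ} (hx : x ∈ spectrum ℝ (G.adjMatrix ℝ)) :
    |x| ≤ G.maxDegree := by
  rw [← Matrix.spectrum_toLin', ← Module.End.hasEigenvalue_iff_mem_spectrum] at hx
  obtain ⟨k, hk⟩ := eigenvalue_mem_ball hx
  have hrow : ∑ j ∈ univ.erase k, ‖G.adjMatrix ℝ k j‖ = G.degree k := by
    simp only [adjMatrix_apply, apply_ite, norm_one, norm_zero, sum_boole]
    rw [filter_erase, erase_eq_of_notMem (by simp), ← neighborFinset_eq_filter,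
      card_neighborFinset_eq_degree]
  rw [Metric.mem_closedBall, Real.dist_eq, adjMatrix_apply, if_neg (G.irrefl), sub_zero,
    hrow] at hk
  exact hk.trans (mod_cast G.degree_le_maxDegree k)

lemma adjMatrix_mul_self_le_maxDegree_smul_abs :
    G.adjMatrix ℝ * G.adjMatrix ℝ ≤ (G.maxDegree : ℝ) • CFC.abs (G.adjMatrix ℝ) :=
  (isHermitian_adjMatrix ℝ G).mul_self_le_smul_abs fun _ => G.abs_le_maxDegree_of_mem_spectrum

lemma degree_le_maxDegree_mul_abs_adjMatrix (i : V) :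
    (G.degree i : ℝ) ≤ G.maxDegree * CFC.abs (G.adjMatrix ℝ) i i := by
  have h := (le_iff.1 G.adjMatrix_mul_self_le_maxDegree_smul_abs).diag_nonneg (i := i)
  rw [Matrix.sub_apply, Matrix.smul_apply, adjMatrix_mul_self_apply_self, smul_eq_mul,
    sub_nonneg] at h
  exact h

lemma adjMatrix_mul_self_apply {R : Type*} [NonAssocSemiring R] (i j : V) :
    (G.adjMatrix R * G.adjMatrix R) i j = #(G.neighborFinset i ∩ G.neighborFinset j) := by
  simp only [adjMatrix_mul_apply, adjMatrix_apply, sum_boole]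
  congr 2
  ext x
  simp [G.adj_comm x]

lemma sum_card_inter_neighborFinset (i : V) :
    ∑ j, #(G.neighborFinset i ∩ G.neighborFinset j) =
      ∑ k ∈ G.neighborFinset i, G.degree k := by
  have h : ∀ j, #(G.neighborFinset i ∩ G.neighborFinset j) =
      (G.adjMatrix ℕ * G.adjMatrix ℕ) i j := fun j => by
    rw [adjMatrix_mul_self_apply, Nat.cast_id]
  simp_rw [h, adjMatrix_mul_apply]
  rw [sum_comm]
  refine sum_congr rfl fun k _ => ?_
  simp only [adjMatrix_apply, sum_boole, Nat.cast_id]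
  rw [← card_neighborFinset_eq_degree, neighborFinset_eq_filter]

lemma sum_sq_card_inter_neighborFinset {i : V}
    (hi : (G.degree i : ℝ) = G.maxDegree * CFC.abs (G.adjMatrix ℝ) i i) :
    ∑ j, #(G.neighborFinset i ∩ G.neighborFinset j) ^ 2 = G.maxDegree ^ 2 * G.degree i := by
  have h := (isHermitian_adjMatrix ℝ G).sum_sq_mul_self_apply
    G.adjMatrix_mul_self_le_maxDegree_smul_abs (i := i) (by rw [adjMatrix_mul_self_apply_self, hi])
  rw [adjMatrix_mul_self_apply_self] at h
  simp only [adjMatrix_mul_self_apply] at h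
  exact_mod_cast h

lemma exists_neighborFinset_eq_of_sum_sq {i : V} (hi : 0 < G.degree i)
    (h : ∑ j, #(G.neighborFinset i ∩ G.neighborFinset j) ^ 2 = G.maxDegree ^ 2 * G.degree i) :
    ∃ S : Finset V, i ∈ S ∧ #S = G.maxDegree ∧ #(G.neighborFinset i) = G.maxDegree ∧
      (∀ j ∈ S, G.neighborFinset j = G.neighborFinset i) ∧
      ∀ k ∈ G.neighborFinset i, G.neighborFinset k = S := by
  set N := G.neighborFinset i
  set D := G.maxDegree
  set c : V → ℕ := fun j => #(N ∩ G.neighborFinset j) with hc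
  have hD : 0 < D := hi.trans_le (G.degree_le_maxDegree i)
  have hdeg : ∀ k, #(G.neighborFinset k) ≤ D := fun k =>
    (card_neighborFinset_eq_degree G k).trans_le (G.degree_le_maxDegree k)
  have hsum_le : ∑ j, c j ≤ D * G.degree i := by
    rw [G.sum_card_inter_neighborFinset i, mul_comm, ← card_neighborFinset_eq_degree]
    exact sum_le_card_nsmul _ _ _ fun k _ => G.degree_le_maxDegree k
  obtain ⟨hsum, hc0D⟩ := sum_eq_and_eq_zero_or_eq_of_sum_sq_eq univ c hD
    (fun j _ => (card_le_card inter_subset_left).trans (hdeg i)) hsum_le h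
  have hNdeg : ∀ k ∈ N, G.degree k = D := by
    refine (sum_eq_sum_iff_of_le fun k _ => G.degree_le_maxDegree k).1 ?_
    rw [← G.sum_card_inter_neighborFinset i, hsum, sum_const, smul_eq_mul, mul_comm,
      card_neighborFinset_eq_degree]
  have hci : c i = G.degree i := by simp [hc, N]
  have hN : #N = D := by
    rcases hc0D i (mem_univ i) with h0 | h0
    · exact absurd (hci ▸ h0) hi.ne'
    · rw [card_neighborFinset_eq_degree, ← hci, h0]
  set S := univ.filter fun j => c j = D
  have hS : ∀ j ∈ S, G.neighborFinset j = N := fun j hj => by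
    have hNj : N ⊆ G.neighborFinset j := inter_eq_left.1 <|
      eq_of_subset_of_card_le inter_subset_left (by rw [hN]; exact (mem_filter.1 hj).2.ge)
    exact (eq_of_subset_of_card_le hNj (by rw [hN]; exact hdeg j)).symm
  have hScard : #S = D := by
    have hsumS : ∑ j, c j = #S * D := by
      rw [← sum_filter_add_sum_filter_not univ fun j => c j = D,
        sum_congr rfl fun j hj => (mem_filter.1 hj).2, sum_const, smul_eq_mul,
        sum_eq_zero fun j hj => (hc0D j (mem_univ j)).resolve_right (mem_filter.1 hj).2, add_zero]
    rw [hsum, ← card_neighborFinset_eq_degree, hN] at hsumS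
    exact Nat.eq_of_mul_eq_mul_right hD hsumS.symm
  refine ⟨S, mem_filter.2 ⟨mem_univ i, by rw [hci, ← card_neighborFinset_eq_degree, hN]⟩,
    hScard, hN, hS, fun k hk => ?_⟩
  have hSk : S ⊆ G.neighborFinset k := fun j hj => by
    rw [mem_neighborFinset, G.adj_comm, ← mem_neighborFinset, hS j hj]
    exact hk
  exact (eq_of_subset_of_card_le hSk
    (by rw [card_neighborFinset_eq_degree, hNdeg k hk, hScard])).symm

lemma compl_eq_and_adj_iff_of_neighborFinset_eq (hconn : G.Connected) {S T : Finset V} {i : V}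
    (hi : i ∈ S) (hS : ∀ j ∈ S, G.neighborFinset j = T)
    (hT : ∀ k ∈ T, G.neighborFinset k = S) :
    Sᶜ = T ∧ ∀ u v, G.Adj u v ↔ (u ∈ S ↔ v ∉ S) := by
  have hST : ∀ j ∈ S, j ∉ T := fun j hj hjT => by
    rw [← hS j hj, mem_neighborFinset] at hjT
    exact G.irrefl hjT
  have hclosed : ∀ u v, G.Adj u v → u ∈ S ∪ T → v ∈ S ∪ T := fun u v huv hu => by
    rw [← mem_neighborFinset] at huv
    rcases mem_union.1 hu with hu | hu
    · exact mem_union_right _ (hS u hu ▸ huv)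
    · exact mem_union_left _ (hT u hu ▸ huv)
  have hcover : ∀ v, v ∈ S ∪ T := by
    suffices ∀ u v (p : G.Walk u v), u ∈ S ∪ T → v ∈ S ∪ T from
      fun v => this i v (hconn i v).some (mem_union_left _ hi)
    intro u v p
    induction p with
    | nil => exact id
    | cons h _ ih => exact fun hu => ih (hclosed _ _ h hu)
  have hcompl : Sᶜ = T := by
    ext v
    rw [mem_compl]
    exact ⟨fun hv => (mem_union.1 (hcover v)).resolve_left hv, fun hv hvS => hST v hvS hv⟩
  refine ⟨hcompl, fun u v => ?_⟩
  rw [← mem_neighborFinset, ← mem_compl (s := S), hcompl]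
  by_cases hu : u ∈ S
  · simp [hu, hS u hu]
  · simp [hu, hT u (hcompl ▸ mem_compl.2 hu), ← hcompl]

def isoCompleteBipartiteGraphOfAdjIff (p : V → Prop) [DecidablePred p]
    (h : ∀ u v, G.Adj u v ↔ (p u ↔ ¬ p v)) :
    G ≃g completeBipartiteGraph {v // p v} {v // ¬ p v} where
  toEquiv := (Equiv.sumCompl p).symm
  map_rel_iff' {u v} := by
    by_cases hu : p u <;> by_cases hv : p v <;> simp [hu, hv, h u v]

theorem nonempty_iso_completeBipartiteGraph_of_sum_sq (hconn : G.Connected) {i : V}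
    (hi : 0 < G.degree i)
    (h : ∑ j, #(G.neighborFinset i ∩ G.neighborFinset j) ^ 2 = G.maxDegree ^ 2 * G.degree i) :
    Nonempty (G ≃g completeBipartiteGraph (Fin G.maxDegree) (Fin G.maxDegree)) := by
  obtain ⟨S, hiS, hS, hN, hSN, hNS⟩ := G.exists_neighborFinset_eq_of_sum_sq hi h
  obtain ⟨hcompl, hadj⟩ := G.compl_eq_and_adj_iff_of_neighborFinset_eq hconn hiS hSN hNS
  have eS : {v // v ∈ S} ≃ Fin G.maxDegree := S.equivFinOfCardEq hS
  have eSc : {v // v ∉ S} ≃ Fin G.maxDegree :=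
    (Equiv.subtypeEquivRight fun v => mem_compl.symm).trans
      (Sᶜ.equivFinOfCardEq (hcompl ▸ hN))
  exact ⟨(G.isoCompleteBipartiteGraphOfAdjIff (· ∈ S) hadj).trans
    (completeBipartiteGraphCongr eS eSc)⟩

lemma adjMatrix_completeBipartiteGraph_mul_self_mul_self {α β : Type*} [Fintype α]
    [Fintype β] :
    (completeBipartiteGraph α β).adjMatrix ℝ * (completeBipartiteGraph α β).adjMatrix ℝ *
        (completeBipartiteGraph α β).adjMatrix ℝ =
      (Fintype.card α * Fintype.card β : ℝ) •
        (completeBipartiteGraph α β).adjMatrix ℝ := by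
  have hK : (completeBipartiteGraph α β).adjMatrix ℝ =
      fromBlocks 0 (of fun _ _ => 1) (of fun _ _ => 1) 0 := by
    ext (u | u) (v | v) <;> simp
  rw [hK]
  ext (u | u) (v | v) <;> simp [fromBlocks_multiply, mul_apply, mul_comm]

lemma abs_adjMatrix_of_iso_completeBipartiteGraph {d : ℕ} (hd : 0 < d)
    (f : G ≃g completeBipartiteGraph (Fin d) (Fin d)) :
    CFC.abs (G.adjMatrix ℝ) = (d : ℝ)⁻¹ • (G.adjMatrix ℝ * G.adjMatrix ℝ) := by
  refine (isHermitian_adjMatrix ℝ G).abs_eq_inv_smul_mul_self (by positivity) ?_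
  have hA : G.adjMatrix ℝ = ((completeBipartiteGraph (Fin d) (Fin d)).adjMatrix ℝ).submatrix
      f.toEquiv f.toEquiv := (f.toEmbedding.submatrix_adjMatrix ℝ).symm
  rw [hA, submatrix_mul_equiv, submatrix_mul_equiv,
    adjMatrix_completeBipartiteGraph_mul_self_mul_self, submatrix_smul]
  simp [sq]

end SimpleGraph

lemma vertexEnergy_eq_abs_adjMatrix {n : ℕ} (G : SimpleGraph (Fin n)) [DecidableRel G.Adj]
    (i : Fin n) : vertexEnergy G i = CFC.abs (G.adjMatrix ℝ) i i := by
  have hM := posSemidef_self_mul_conjTranspose (G.adjMatrix ℝ)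
  have h : vertexEnergy G i = hM.1.cfc Real.sqrt i i := rfl
  have habs : CFC.abs (G.adjMatrix ℝ) = CFC.sqrt (G.adjMatrix ℝ * (G.adjMatrix ℝ)ᴴ) := by
    rw [CFC.abs, star_eq_conjTranspose, (G.isHermitian_adjMatrix ℝ).eq]
  rw [h, habs, CFC.sqrt_eq_real_sqrt _ hM.nonneg, cfcₙ_eq_cfc, hM.1.cfc_eq]

theorem stmt_3 {n : ℕ} (G : SimpleGraph (Fin n)) [DecidableRel G.Adj]
    (hconn : G.Connected) (hedge : G.edgeSet.Nonempty) :
    (∀ i : Fin n, (G.degree i : ℝ) / (G.maxDegree : ℝ) ≤ vertexEnergy G i) ∧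
    ((∃ i : Fin n, vertexEnergy G i = (G.degree i : ℝ) / (G.maxDegree : ℝ)) ↔
      Nonempty (G ≃g completeBipartiteGraph (Fin G.maxDegree) (Fin G.maxDegree))) := by
  have hdeg := hconn.degree_pos hedge
  obtain ⟨i₀⟩ := hconn.nonempty
  have hΔ : 0 < G.maxDegree := (hdeg i₀).trans_le (G.degree_le_maxDegree i₀)
  have hΔR : (0 : ℝ) < G.maxDegree := mod_cast hΔ
  refine ⟨fun i => ?_, fun ⟨i, hi⟩ => ?_, fun ⟨f⟩ => ⟨i₀, ?_⟩⟩
  · rw [vertexEnergy_eq_abs_adjMatrix, div_le_iff₀' hΔR]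
    exact G.degree_le_maxDegree_mul_abs_adjMatrix i
  · rw [vertexEnergy_eq_abs_adjMatrix, eq_div_iff hΔR.ne'] at hi
    exact G.nonempty_iso_completeBipartiteGraph_of_sum_sq hconn (hdeg i)
      (G.sum_sq_card_inter_neighborFinset (by rw [← hi, mul_comm]))
  · rw [vertexEnergy_eq_abs_adjMatrix, G.abs_adjMatrix_of_iso_completeBipartiteGraph hΔ f,
      Matrix.smul_apply, G.adjMatrix_mul_self_apply_self, smul_eq_mul]
    field_simp
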